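/- Let C be a bivariate copula admitting a tail dependence function Λ. Then the supremum of λ_μ(C) over all tail generating measures μ equals max( lim_{t↓0} Λ(t,1)/t , lim_{t↓0} Λ(1,t)/t ) (both limits exist since the normalized functions are [0,1]-valued and decreasing on (0,1]). Moreover this supremum is already attained as the supremum of λ_μ(C) over the subfamily of tail generating measures concentrated on a single line segment { (u, au) : 0 < u ≤ min(1, 1/a) } for some a ∈ (0,∞). -/

import Mathlib

open MeasureTheory Filter Set

/-- A bivariate copula: `C : [0,1]² → [0,1]` with the grounded/marginal conditions and
the 2-increasing property. -/
def IsCopula (C : ℝ → ℝ → ℝ) : Prop :=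
  (∀ u ∈ Icc (0:ℝ) 1, ∀ v ∈ Icc (0:ℝ) 1, C u v ∈ Icc (0:ℝ) 1) ∧
  (∀ u ∈ Icc (0:ℝ) 1, C u 0 = 0 ∧ C 0 u = 0 ∧ C u 1 = u ∧ C 1 u = u) ∧
  (∀ u u' v v' : ℝ, u ∈ Icc (0:ℝ) 1 → u' ∈ Icc (0:ℝ) 1 →
    v ∈ Icc (0:ℝ) 1 → v' ∈ Icc (0:ℝ) 1 → u ≤ u' → v ≤ v' →
    0 ≤ C u' v' - C u' v - C u v' + C u v)

/-- `Λ` is the tail dependence function of `C`: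
`Λ(u,v) = lim_{p↓0} C(pu,pv)/p` for every `(u,v) ∈ [0,∞)²`. -/
def HasTDF (C Λ : ℝ → ℝ → ℝ) : Prop :=
  ∀ u v : ℝ, 0 ≤ u → 0 ≤ v →
    Tendsto (fun p : ℝ => C (p * u) (p * v) / p)
      (nhdsWithin (0:ℝ) (Ioi 0)) (nhds (Λ u v))

/-- A tail generating measure: a Borel probability measure on `[0,1]²` whose mass is not
concentrated on `{u = 0} ∪ {v = 0}`. -/
def IsTailGenMeasure (μ : Measure (ℝ × ℝ)) : Prop :=
  IsProbabilityMeasure μ ∧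
  μ ((Icc (0:ℝ) 1 ×ˢ Icc (0:ℝ) 1)ᶜ) = 0 ∧
  μ {q : ℝ × ℝ | q.1 = 0 ∨ q.2 = 0} < 1

/-- The μ-tail dependence measure: `λ_μ = (∫ Λ dμ) / (∫ min dμ)`, applied to
the tail dependence function `Λ` of the copula. -/
noncomputable def tdm (Λ : ℝ → ℝ → ℝ) (μ : Measure (ℝ × ℝ)) : ℝ :=
  (∫ q, Λ q.1 q.2 ∂μ) / (∫ q : ℝ × ℝ, min q.1 q.2 ∂μ)

open Topology

/-! `Λ` is positively homogeneous and monotone, so `Λ t 1 / t = Λ 1 t⁻¹` is antitone in `t` and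
bounded by `1`; this gives the limits `l₁`, `l₂` as suprema. Homogeneity then yields
`Λ u v ≤ max l₁ l₂ * min u v`, and integrating this against a tail generating measure bounds `λ_μ`
by `max l₁ l₂`. Conversely, the Dirac masses at `(t, 1)` and `(1, t)` sit on line segments through
the origin and have `λ_μ = Λ t 1 / t` and `Λ 1 t / t`, which tend to `l₁` and `l₂` as `t ↓ 0`. -/

namespace IsCopula

variable {C : ℝ → ℝ → ℝ}

theorem swap (hC : IsCopula C) : IsCopula (Function.swap C) := by
  refine ⟨fun u hu v hv => hC.1 v hv u hu, fun u hu => ?_, ?_⟩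
  · obtain ⟨h0, h0', h1, h1'⟩ := hC.2.1 u hu
    exact ⟨h0', h0, h1', h1⟩
  · intro u u' v v' hu hu' hv hv' huu' hvv'
    have := hC.2.2 v v' u u' hv hv' hu hu' hvv' huu'
    dsimp only [Function.swap]
    linarith

theorem mono_left (hC : IsCopula C) {u u' v : ℝ} (hu : u ∈ Icc (0:ℝ) 1)
    (hu' : u' ∈ Icc (0:ℝ) 1) (hv : v ∈ Icc (0:ℝ) 1) (h : u ≤ u') : C u v ≤ C u' v := by
  have := hC.2.2 u u' 0 v hu hu' (left_mem_Icc.2 zero_le_one) hv h hv.1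
  have := (hC.2.1 u hu).1
  have := (hC.2.1 u' hu').1
  linarith

theorem sub_le_left (hC : IsCopula C) {u u' v : ℝ} (hu : u ∈ Icc (0:ℝ) 1)
    (hu' : u' ∈ Icc (0:ℝ) 1) (hv : v ∈ Icc (0:ℝ) 1) (h : u ≤ u') :
    C u' v - C u v ≤ u' - u := by
  have := hC.2.2 u u' v 1 hu hu' hv (right_mem_Icc.2 zero_le_one) h hv.2
  have := (hC.2.1 u hu).2.2.1
  have := (hC.2.1 u' hu').2.2.1
  linarith

theorem le_left (hC : IsCopula C) {u v : ℝ} (hu : u ∈ Icc (0:ℝ) 1)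
    (hv : v ∈ Icc (0:ℝ) 1) : C u v ≤ u := by
  have hmono : C u v ≤ C u 1 := hC.swap.mono_left hv (right_mem_Icc.2 zero_le_one) hu hv.2
  exact hmono.trans_eq (hC.2.1 u hu).2.2.1

theorem le_min (hC : IsCopula C) {u v : ℝ} (hu : u ∈ Icc (0:ℝ) 1)
    (hv : v ∈ Icc (0:ℝ) 1) : C u v ≤ min u v :=
  _root_.le_min (hC.le_left hu hv) (hC.swap.le_left hv hu)

theorem abs_sub_le_left (hC : IsCopula C) {u u' v : ℝ} (hu : u ∈ Icc (0:ℝ) 1)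
    (hu' : u' ∈ Icc (0:ℝ) 1) (hv : v ∈ Icc (0:ℝ) 1) : |C u v - C u' v| ≤ |u - u'| := by
  rcases le_total u u' with h | h
  · rw [abs_sub_comm, abs_sub_comm u, abs_of_nonneg (sub_nonneg.2 (hC.mono_left hu hu' hv h)),
      abs_of_nonneg (sub_nonneg.2 h)]
    exact hC.sub_le_left hu hu' hv h
  · rw [abs_of_nonneg (sub_nonneg.2 (hC.mono_left hu' hu hv h)), abs_of_nonneg (sub_nonneg.2 h)]
    exact hC.sub_le_left hu' hu hv h

theorem abs_sub_le (hC : IsCopula C) {u u' v v' : ℝ} (hu : u ∈ Icc (0:ℝ) 1)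
    (hu' : u' ∈ Icc (0:ℝ) 1) (hv : v ∈ Icc (0:ℝ) 1) (hv' : v' ∈ Icc (0:ℝ) 1) :
    |C u v - C u' v'| ≤ |u - u'| + |v - v'| :=
  calc |C u v - C u' v'| ≤ |C u v - C u' v| + |C u' v - C u' v'| := _root_.abs_sub_le _ _ _
    _ ≤ |u - u'| + |v - v'| :=
      add_le_add (hC.abs_sub_le_left hu hu' hv) (hC.swap.abs_sub_le_left hv hv' hu')

end IsCopula

theorem eventually_mul_mem_unitInterval {x : ℝ} (hx : 0 ≤ x) :
    ∀ᶠ p in 𝓝[>] (0:ℝ), p * x ∈ Icc (0:ℝ) 1 := by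
  have hlim : Tendsto (· * x) (𝓝[>] (0:ℝ)) (𝓝 0) := by
    simpa using ((continuous_mul_const x).tendsto 0).mono_left nhdsWithin_le_nhds
  filter_upwards [self_mem_nhdsWithin, hlim.eventually (ge_mem_nhds one_pos)] with p hp hp1
  exact ⟨mul_nonneg hp.le hx, hp1⟩

theorem eventually_pos_mul_mem_unitInterval {u v : ℝ} (hu : 0 ≤ u) (hv : 0 ≤ v) :
    ∀ᶠ p in 𝓝[>] (0:ℝ), 0 < p ∧ p * u ∈ Icc (0:ℝ) 1 ∧ p * v ∈ Icc (0:ℝ) 1 := by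
  filter_upwards [self_mem_nhdsWithin, eventually_mul_mem_unitInterval hu,
    eventually_mul_mem_unitInterval hv] with p hp h₁ h₂ using ⟨hp, h₁, h₂⟩

namespace HasTDF

variable {C Λ : ℝ → ℝ → ℝ}

theorem swap (hΛ : HasTDF C Λ) : HasTDF (Function.swap C) (Function.swap Λ) :=
  fun u v hu hv => hΛ v u hv hu

theorem le_min (hC : IsCopula C) (hΛ : HasTDF C Λ) {u v : ℝ} (hu : 0 ≤ u) (hv : 0 ≤ v) :
    Λ u v ≤ min u v := by
  refine le_of_tendsto (hΛ u v hu hv) ?_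
  filter_upwards [eventually_pos_mul_mem_unitInterval hu hv] with p ⟨hp, hpu, hpv⟩
  rw [div_le_iff₀ hp, mul_comm _ p, mul_min_of_nonneg _ _ hp.le]
  exact hC.le_min hpu hpv

theorem mono_right (hC : IsCopula C) (hΛ : HasTDF C Λ) {u v v' : ℝ} (hu : 0 ≤ u) (hv : 0 ≤ v)
    (h : v ≤ v') : Λ u v ≤ Λ u v' := by
  have hv' := hv.trans h
  refine le_of_tendsto_of_tendsto (hΛ u v hu hv) (hΛ u v' hu hv') ?_
  filter_upwards [eventually_pos_mul_mem_unitInterval hu hv,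
    eventually_pos_mul_mem_unitInterval hu hv'] with p ⟨hp, hpu, hpv⟩ ⟨_, _, hpv'⟩
  exact div_le_div_of_nonneg_right
    (hC.swap.mono_left hpv hpv' hpu (mul_le_mul_of_nonneg_left h hp.le)) hp.le

theorem abs_sub_le (hC : IsCopula C) (hΛ : HasTDF C Λ) {u u' v v' : ℝ} (hu : 0 ≤ u)
    (hu' : 0 ≤ u') (hv : 0 ≤ v) (hv' : 0 ≤ v') :
    |Λ u v - Λ u' v'| ≤ |u - u'| + |v - v'| := by
  refine le_of_tendsto (((hΛ u v hu hv).sub (hΛ u' v' hu' hv')).abs) ?_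
  filter_upwards [eventually_pos_mul_mem_unitInterval hu hv,
    eventually_pos_mul_mem_unitInterval hu' hv'] with p ⟨hp, hpu, hpv⟩ ⟨_, hpu', hpv'⟩
  rw [← sub_div, abs_div, abs_of_pos hp, div_le_iff₀ hp]
  calc |C (p * u) (p * v) - C (p * u') (p * v')| ≤ |p * u - p * u'| + |p * v - p * v'| :=
        hC.abs_sub_le hpu hpu' hpv hpv'
    _ = (|u - u'| + |v - v'|) * p := by
        rw [← mul_sub, ← mul_sub, abs_mul, abs_mul, abs_of_pos hp]; ring

theorem continuousOn (hC : IsCopula C) (hΛ : HasTDF C Λ) :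
    ContinuousOn (Function.uncurry Λ) (Ici 0 ×ˢ Ici 0) := by
  refine (LipschitzOnWith.of_dist_le_mul (K := 2) fun q hq q' hq' => ?_).continuousOn
  have h₁ : |q.1 - q'.1| ≤ dist q q' := (le_max_left _ _).trans_eq' (Real.dist_eq _ _).symm
  have h₂ : |q.2 - q'.2| ≤ dist q q' := (le_max_right _ _).trans_eq' (Real.dist_eq _ _).symm
  show |Λ q.1 q.2 - Λ q'.1 q'.2| ≤ 2 * dist q q'
  linarith [hΛ.abs_sub_le hC hq.1 hq'.1 hq.2 hq'.2]

theorem homogeneous (hΛ : HasTDF C Λ) {c u v : ℝ} (hc : 0 < c) (hu : 0 ≤ u) (hv : 0 ≤ v) :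
    Λ (c * u) (c * v) = c * Λ u v := by
  have hscale : Tendsto (· * c) (𝓝[>] (0:ℝ)) (𝓝[>] 0) := by
    refine tendsto_nhdsWithin_of_tendsto_nhds_of_eventually_within _ ?_ ?_
    · simpa using ((continuous_mul_const c).tendsto 0).mono_left nhdsWithin_le_nhds
    · filter_upwards [self_mem_nhdsWithin] with p (hp : 0 < p) using mul_pos hp hc
  refine tendsto_nhds_unique (hΛ _ _ (by positivity) (by positivity)) ?_
  refine (((hΛ u v hu hv).comp hscale).const_mul c).congr' ?_
  filter_upwards [self_mem_nhdsWithin] with p (hp : 0 < p)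
  simp only [Function.comp, mul_assoc]
  field_simp

theorem slope_eq_inv (hΛ : HasTDF C Λ) {t : ℝ} (ht : 0 < t) : Λ t 1 / t = Λ 1 t⁻¹ := by
  have := hΛ.homogeneous ht zero_le_one (inv_nonneg.2 ht.le)
  rw [mul_one, mul_inv_cancel₀ ht.ne'] at this
  rw [this, mul_div_cancel_left₀ _ ht.ne']

theorem exists_tendsto_slope (hC : IsCopula C) (hΛ : HasTDF C Λ) :
    ∃ l, Tendsto (fun t => Λ t 1 / t) (𝓝[>] 0) (𝓝 l) ∧ ∀ t > 0, Λ t 1 / t ≤ l := by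
  have hanti : AntitoneOn (fun t => Λ t 1 / t) (Ioi 0) := fun s hs t ht hst => by
    simp only [hΛ.slope_eq_inv hs, hΛ.slope_eq_inv ht]
    exact hΛ.mono_right hC zero_le_one (inv_nonneg.2 ht.le) (inv_anti₀ hs hst)
  have hbdd : BddAbove ((fun t => Λ t 1 / t) '' Ioi 0) := by
    refine ⟨1, ?_⟩
    rintro _ ⟨t, ht : 0 < t, rfl⟩
    rw [div_le_one ht]
    exact (hΛ.le_min hC ht.le zero_le_one).trans (min_le_left _ _)
  exact ⟨_, hanti.tendsto_nhdsGT hbdd, fun t ht => le_csSup hbdd ⟨t, ht, rfl⟩⟩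

theorem le_mul_of_slope_le {l u v : ℝ} (hC : IsCopula C) (hΛ : HasTDF C Λ)
    (hl : ∀ t > 0, Λ t 1 / t ≤ l) (hu : 0 ≤ u) (huv : u ≤ v) : Λ u v ≤ l * u := by
  rcases hu.eq_or_lt with rfl | hu
  · simpa using (hΛ.le_min hC le_rfl huv).trans (min_le_left _ _)
  have hv := hu.trans_le huv
  have hslope := hl (u / v) (div_pos hu hv)
  rw [div_le_iff₀ (div_pos hu hv)] at hslope
  calc Λ u v = v * Λ (u / v) 1 := by
        rw [← hΛ.homogeneous hv (div_pos hu hv).le zero_le_one, mul_div_cancel₀ _ hv.ne', mul_one]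
    _ ≤ v * (l * (u / v)) := mul_le_mul_of_nonneg_left hslope hv.le
    _ = l * u := by field_simp

theorem le_max_mul_min {l₁ l₂ u v : ℝ} (hC : IsCopula C) (hΛ : HasTDF C Λ)
    (h₁ : ∀ t > 0, Λ t 1 / t ≤ l₁) (h₂ : ∀ t > 0, Λ 1 t / t ≤ l₂) (hu : 0 ≤ u) (hv : 0 ≤ v) :
    Λ u v ≤ max l₁ l₂ * min u v := by
  rcases le_total u v with huv | hvu
  · rw [min_eq_left huv]
    exact (hΛ.le_mul_of_slope_le hC h₁ hu huv).trans
      (mul_le_mul_of_nonneg_right (le_max_left _ _) hu)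
  · rw [min_eq_right hvu]
    exact (hΛ.swap.le_mul_of_slope_le hC.swap h₂ hv hvu).trans
      (mul_le_mul_of_nonneg_right (le_max_right _ _) hv)

end HasTDF

theorem csSup_eq_of_forall_le_of_tendsto {α : Type*} {F : Filter α} [F.NeBot] {S : Set ℝ}
    {f : α → ℝ} {a : ℝ} (hub : ∀ x ∈ S, x ≤ a) (hf : ∀ᶠ t in F, f t ∈ S)
    (hlim : Tendsto f F (𝓝 a)) : sSup S = a :=
  le_antisymm (csSup_le (hf.exists.elim fun t ht => ⟨f t, ht⟩) hub)
    (le_of_tendsto hlim (hf.mono fun _ ht => le_csSup ⟨a, hub⟩ ht))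

namespace IsTailGenMeasure

variable {μ : Measure (ℝ × ℝ)}

theorem ae_mem_unitSquare (hμ : IsTailGenMeasure μ) :
    ∀ᵐ q ∂μ, q ∈ Icc (0:ℝ) 1 ×ˢ Icc (0:ℝ) 1 :=
  mem_ae_iff.2 hμ.2.1

theorem integrable_of_continuousOn (hμ : IsTailGenMeasure μ) {f : ℝ × ℝ → ℝ}
    (hf : ContinuousOn f (Icc (0:ℝ) 1 ×ˢ Icc (0:ℝ) 1)) : Integrable f μ := by
  have := hμ.1
  rw [← Measure.restrict_eq_self_of_ae_mem hμ.ae_mem_unitSquare]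
  exact hf.integrableOn_compact (isCompact_Icc.prod isCompact_Icc)

theorem integral_min_pos (hμ : IsTailGenMeasure μ) : 0 < ∫ q, min q.1 q.2 ∂μ := by
  have hnonneg : 0 ≤ᵐ[μ] fun q : ℝ × ℝ => min q.1 q.2 := by
    filter_upwards [hμ.ae_mem_unitSquare] with q hq using le_min hq.1.1 hq.2.1
  rw [integral_pos_iff_support_of_nonneg_ae hnonneg
    (hμ.integrable_of_continuousOn (continuous_fst.min continuous_snd).continuousOn)]
  have hsupp : {q : ℝ × ℝ | q.1 = 0 ∨ q.2 = 0}ᶜ ⊆ Function.support fun q => min q.1 q.2 := by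
    rintro q hq
    simp only [mem_compl_iff, mem_ofPred_eq, not_or] at hq
    rcases min_choice q.1 q.2 with h | h <;> simp [h, hq.1, hq.2]
  refine lt_of_lt_of_le (pos_iff_ne_zero.2 fun h0 => ?_) (measure_mono hsupp)
  have := measure_univ_le_add_compl {q : ℝ × ℝ | q.1 = 0 ∨ q.2 = 0} (μ := μ)
  rw [h0, add_zero, hμ.1.measure_univ] at this
  exact hμ.2.2.not_ge this

theorem tdm_le {Λ : ℝ → ℝ → ℝ} {M : ℝ} (hμ : IsTailGenMeasure μ)
    (hcont : ContinuousOn (Function.uncurry Λ) (Icc (0:ℝ) 1 ×ˢ Icc (0:ℝ) 1))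
    (hle : ∀ q ∈ Icc (0:ℝ) 1 ×ˢ Icc (0:ℝ) 1, Λ q.1 q.2 ≤ M * min q.1 q.2) : tdm Λ μ ≤ M := by
  have hmin := hμ.integrable_of_continuousOn (continuous_fst.min continuous_snd).continuousOn
  rw [tdm, div_le_iff₀ hμ.integral_min_pos, ← integral_const_mul]
  refine integral_mono_ae (hμ.integrable_of_continuousOn hcont) (hmin.const_mul M) ?_
  filter_upwards [hμ.ae_mem_unitSquare] with q hq using hle q hq

end IsTailGenMeasure

theorem MeasureTheory.Measure.dirac_compl_eq_zero {α : Type*} [MeasurableSpace α]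
    [MeasurableSingletonClass α] {x : α} {s : Set α} (h : x ∈ s) : Measure.dirac x sᶜ = 0 := by
  rw [← mem_ae_iff, ae_dirac_eq]
  exact h

theorem isTailGenMeasure_dirac {u v : ℝ} (hu : u ∈ Ioc (0:ℝ) 1) (hv : v ∈ Ioc (0:ℝ) 1) :
    IsTailGenMeasure (Measure.dirac (u, v)) := by
  refine ⟨inferInstance, ?_, ?_⟩
  · exact Measure.dirac_compl_eq_zero ⟨Ioc_subset_Icc_self hu, Ioc_subset_Icc_self hv⟩
  · rw [Measure.dirac_apply, indicator_of_notMem (by simp [hu.1.ne', hv.1.ne'])]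
    exact zero_lt_one

theorem tdm_dirac (Λ : ℝ → ℝ → ℝ) (x : ℝ × ℝ) :
    tdm Λ (Measure.dirac x) = Λ x.1 x.2 / min x.1 x.2 := by
  rw [tdm, integral_dirac, integral_dirac]

theorem dirac_compl_lineSegment {u v : ℝ} (hu : u ∈ Ioc (0:ℝ) 1) (hv : v ∈ Ioc (0:ℝ) 1) :
    Measure.dirac (u, v)
      ({q : ℝ × ℝ | ∃ w : ℝ, 0 < w ∧ w ≤ min 1 (1 / (v / u)) ∧ q = (w, v / u * w)}ᶜ) = 0 := by
  refine Measure.dirac_compl_eq_zero ⟨u, hu.1, le_min hu.2 ?_, by rw [div_mul_cancel₀ _ hu.1.ne']⟩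
  rw [one_div_div, le_div_iff₀ hv.1]
  exact mul_le_of_le_one_right hu.1.le hv.2

theorem tdm_dirac_mem_lineFamily (Λ : ℝ → ℝ → ℝ) {u v : ℝ} (hu : u ∈ Ioc (0:ℝ) 1)
    (hv : v ∈ Ioc (0:ℝ) 1) :
    tdm Λ (Measure.dirac (u, v)) ∈ {x : ℝ | ∃ (a : ℝ) (μ : Measure (ℝ × ℝ)), 0 < a ∧
      IsTailGenMeasure μ ∧
      μ ({q : ℝ × ℝ | ∃ w : ℝ, 0 < w ∧ w ≤ min 1 (1 / a) ∧ q = (w, a * w)}ᶜ) = 0 ∧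
      x = tdm Λ μ} :=
  ⟨v / u, _, div_pos hv.1 hu.1, isTailGenMeasure_dirac hu hv, dirac_compl_lineSegment hu hv, rfl⟩

theorem maximal_tdm_formula (C Λ : ℝ → ℝ → ℝ)
    (hC : IsCopula C) (hΛ : HasTDF C Λ) :
    ∃ l₁ l₂ : ℝ,
      Tendsto (fun t => Λ t 1 / t) (nhdsWithin (0:ℝ) (Ioi 0)) (nhds l₁) ∧
      Tendsto (fun t => Λ 1 t / t) (nhdsWithin (0:ℝ) (Ioi 0)) (nhds l₂) ∧
      sSup {x : ℝ | ∃ μ : Measure (ℝ × ℝ), IsTailGenMeasure μ ∧ x = tdm Λ μ} = max l₁ l₂ ∧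
      sSup {x : ℝ | ∃ (a : ℝ) (μ : Measure (ℝ × ℝ)), 0 < a ∧ IsTailGenMeasure μ ∧
          μ ({q : ℝ × ℝ | ∃ u : ℝ, 0 < u ∧ u ≤ min 1 (1 / a) ∧ q = (u, a * u)}ᶜ) = 0 ∧
          x = tdm Λ μ} = max l₁ l₂ := by
  obtain ⟨l₁, hlim₁, hle₁⟩ := hΛ.exists_tendsto_slope hC
  obtain ⟨l₂, hlim₂, hle₂⟩ := hΛ.swap.exists_tendsto_slope hC.swap
  have hbound : ∀ μ, IsTailGenMeasure μ → tdm Λ μ ≤ max l₁ l₂ := fun μ hμ =>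
    hμ.tdm_le ((hΛ.continuousOn hC).mono (prod_mono Icc_subset_Ici_self Icc_subset_Ici_self))
      fun q hq => hΛ.le_max_mul_min hC hle₁ hle₂ hq.1.1 hq.2.1
  set f : ℝ → ℝ := fun t => max (tdm Λ (Measure.dirac (t, 1))) (tdm Λ (Measure.dirac (1, t)))
  have hf : Tendsto f (𝓝[>] 0) (𝓝 (max l₁ l₂)) := by
    refine (hlim₁.max hlim₂).congr' ?_
    filter_upwards [Ioc_mem_nhdsGT one_pos] with t ht
    simp only [f, tdm_dirac, min_eq_left ht.2, min_eq_right ht.2]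
  have hone : (1:ℝ) ∈ Ioc (0:ℝ) 1 := right_mem_Ioc.2 one_pos
  have hline := Eventually.mono (Ioc_mem_nhdsGT (zero_lt_one' ℝ)) fun t ht =>
    max_rec' _ (tdm_dirac_mem_lineFamily Λ ht hone) (tdm_dirac_mem_lineFamily Λ hone ht)
  refine ⟨l₁, l₂, hlim₁, hlim₂, csSup_eq_of_forall_le_of_tendsto ?_ ?_ hf,
    csSup_eq_of_forall_le_of_tendsto ?_ hline hf⟩
  · rintro _ ⟨μ, hμ, rfl⟩
    exact hbound μ hμ
  · filter_upwards [hline] with t ⟨_, μ, _, hμ, _, ht⟩ using ⟨μ, hμ, ht⟩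
  · rintro _ ⟨_, μ, _, hμ, _, rfl⟩
    exact hbound μ hμ
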